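/- arXiv:2407.11044 — 3 statements merged into one kernel-verified Lean document; each statement's English description precedes it below -/
import Mathlib

section
/- (Policy Improvement, Lemma 2) Let Π be a set of policies, let π_old ∈ Π, and let π_new ∈ Π be such that for every state s, ∑_a π_new(a|s) Q^{π_old}(s,a) = max over π' ∈ Π of ∑_a π'(a|s) Q^{π_old}(s,a) (in particular ∑_a π_new(a|s) Q^{π_old}(s,a) ≥ ∑_a π_old(a|s) Q^{π_old}(s,a), since π_old ∈ Π). Then Q^{π_new}(s,a) ≥ Q^{π_old}(s,a) for all (s,a) ∈ S × A. -/
open Finset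

/-- The Bellman backup operator `T^π` for a finite MDP. -/
noncomputable def bellman {S A : Type*} [Fintype S] [Fintype A]
    (p : S → A → S → ℝ) (r : S → A → ℝ) (γ : ℝ) (π : S → A → ℝ)
    (Q : S × A → ℝ) : S × A → ℝ :=
  fun sa => r sa.1 sa.2 + γ * ∑ s', p sa.1 sa.2 s' * ∑ a', π s' a' * Q (s', a')

/-- **Policy Improvement.** Let `Π` be a set of policies, `π_old ∈ Π`, and let `π_new ∈ Π`
attain, in every state, the maximum over `π' ∈ Π` of `∑_a π'(a|s) Q^{π_old}(s,a)`.
Then `Q^{π_new} ≥ Q^{π_old}` pointwise. -/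
theorem policy_improvement
    {S A : Type*} [Fintype S] [Fintype A] [Nonempty S] [Nonempty A]
    (p : S → A → S → ℝ) (r : S → A → ℝ) (γ : ℝ)
    (hp0 : ∀ s a s', 0 ≤ p s a s') (hp1 : ∀ s a, ∑ s', p s a s' = 1)
    (hγ0 : 0 ≤ γ) (hγ1 : γ < 1)
    (Pi : Set (S → A → ℝ))
    (hPi : ∀ π ∈ Pi, (∀ s a, 0 ≤ π s a) ∧ (∀ s, ∑ a, π s a = 1))
    (πold : S → A → ℝ) (hπold : πold ∈ Pi)
    (πnew : S → A → ℝ) (hπnew : πnew ∈ Pi)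
    (Qold : S × A → ℝ) (hQold : bellman p r γ πold Qold = Qold)
    (Qnew : S × A → ℝ) (hQnew : bellman p r γ πnew Qnew = Qnew)
    (hmax : ∀ s : S, ∀ π' ∈ Pi,
      ∑ a, π' s a * Qold (s, a) ≤ ∑ a, πnew s a * Qold (s, a)) :
    ∀ sa : S × A, Qold sa ≤ Qnew sa := by
  obtain ⟨hnew0, hnew1⟩ := hPi πnew hπnew
  set D : S × A → ℝ := fun sa => Qold sa - Qnew sa with hDdef
  have hne : (Finset.univ : Finset (S × A)).Nonempty := univ_nonempty
  set M : ℝ := Finset.univ.sup' hne D with hM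
  have hDM : ∀ sa : S × A, D sa ≤ M := fun sa => le_sup' D (mem_univ sa)
  -- key step: D sa ≤ γ * M for all sa
  have key : ∀ sa : S × A, D sa ≤ γ * M := by
    intro ⟨s, a⟩
    have h1 : Qold (s, a) ≤ bellman p r γ πnew Qold (s, a) := by
      conv_lhs => rw [← hQold]
      simp only [bellman]
      have : ∑ s', p s a s' * ∑ a', πold s' a' * Qold (s', a')
          ≤ ∑ s', p s a s' * ∑ a', πnew s' a' * Qold (s', a') :=
        Finset.sum_le_sum fun s' _ =>
          mul_le_mul_of_nonneg_left (hmax s' πold hπold) (hp0 s a s')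
      nlinarith
    have h2 : bellman p r γ πnew Qnew (s, a) = Qnew (s, a) := by rw [hQnew]
    have h3 : D (s, a) ≤ bellman p r γ πnew Qold (s, a) - bellman p r γ πnew Qnew (s, a) := by
      simp only [hDdef]; rw [h2]; linarith
    have h4 : bellman p r γ πnew Qold (s, a) - bellman p r γ πnew Qnew (s, a)
        = γ * ∑ s', p s a s' * ∑ a', πnew s' a' * D (s', a') := by
      simp only [bellman, hDdef, mul_sub, Finset.sum_sub_distrib]
      ring
    have h5 : ∑ s', p s a s' * ∑ a', πnew s' a' * D (s', a') ≤ M := by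
      calc ∑ s', p s a s' * ∑ a', πnew s' a' * D (s', a')
          ≤ ∑ s', p s a s' * M := by
            refine Finset.sum_le_sum fun s' _ => ?_
            refine mul_le_mul_of_nonneg_left ?_ (hp0 s a s')
            calc ∑ a', πnew s' a' * D (s', a') ≤ ∑ a', πnew s' a' * M :=
                  Finset.sum_le_sum fun a' _ =>
                    mul_le_mul_of_nonneg_left (hDM _) (hnew0 s' a')
              _ = M := by rw [← Finset.sum_mul, hnew1 s', one_mul]
        _ = M := by rw [← Finset.sum_mul, hp1 s a, one_mul]
    calc D (s, a) ≤ γ * ∑ s', p s a s' * ∑ a', πnew s' a' * D (s', a') := by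
          rw [← h4]; exact h3
      _ ≤ γ * M := mul_le_mul_of_nonneg_left h5 hγ0
  have hMle : M ≤ γ * M := by
    obtain ⟨sa0, _, hsa0⟩ := Finset.exists_mem_eq_sup' hne D
    calc M = D sa0 := by rw [hM, hsa0]
      _ ≤ γ * M := key sa0
  have hM0 : M ≤ 0 := by nlinarith
  intro sa
  have := (hDM sa).trans hM0
  simp only [hDdef] at this
  linarith
end

section
/- Suppose |r(s,a)| ≤ R for all (s,a), and let (π_i)_{i ≥ 0} be a sequence of policies such that for every i and every state s, ∑_a π_{i+1}(a|s) Q^{π_i}(s,a) ≥ ∑_a π_i(a|s) Q^{π_i}(s,a). Then the sequence of functions Q^{π_i} is pointwise monotonically nondecreasing and bounded above by R/(1−γ), and hence for every (s,a) the sequence Q^{π_i}(s,a) converges. -/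
open Finset Filter

/-- With bounded rewards, a sequence of policies `π_i` such that each `π_{i+1}` improves on
`π_i` against `Q^{π_i}` gives a pointwise nondecreasing sequence `Q^{π_i}` bounded above by
`R/(1-γ)`; hence `Q^{π_i}(s,a)` converges for every `(s,a)`. -/
theorem policy_iteration_monotone_bounded_converges
    {S A : Type*} [Fintype S] [Fintype A] [Nonempty S] [Nonempty A]
    (p : S → A → S → ℝ) (r : S → A → ℝ) (γ : ℝ)
    (hp0 : ∀ s a s', 0 ≤ p s a s') (hp1 : ∀ s a, ∑ s', p s a s' = 1)
    (hγ0 : 0 ≤ γ) (hγ1 : γ < 1)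
    (R : ℝ) (hR : ∀ s a, |r s a| ≤ R)
    (πs : ℕ → S → A → ℝ)
    (hπ0 : ∀ i s a, 0 ≤ πs i s a) (hπ1 : ∀ i s, ∑ a, πs i s a = 1)
    (Qs : ℕ → S × A → ℝ) (hQs : ∀ i, bellman p r γ (πs i) (Qs i) = Qs i)
    (himp : ∀ i, ∀ s : S,
      ∑ a, πs i s a * Qs i (s, a) ≤ ∑ a, πs (i + 1) s a * Qs i (s, a)) :
    (∀ sa : S × A, Monotone fun i => Qs i sa) ∧
      (∀ i, ∀ sa : S × A, Qs i sa ≤ R / (1 - γ)) ∧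
      (∀ sa : S × A, ∃ L : ℝ, Tendsto (fun i => Qs i sa) atTop (nhds L)) := by
  -- Step 1: monotone step
  have hstep : ∀ i, ∀ sa : S × A, Qs i sa ≤ Qs (i + 1) sa := by
    intro i
    obtain ⟨sa₀, -, hsa₀⟩ := Finset.exists_min_image (univ : Finset (S × A))
      (fun sa => Qs (i + 1) sa - Qs i sa) univ_nonempty
    set m := Qs (i + 1) sa₀ - Qs i sa₀ with hm
    have inner : ∀ s' : S,
        m ≤ (∑ a', πs (i + 1) s' a' * Qs (i + 1) (s', a'))
            - ∑ a', πs i s' a' * Qs i (s', a') := by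
      intro s'
      have h4 : ∑ a', πs (i + 1) s' a' * m
          ≤ ∑ a', πs (i + 1) s' a' * (Qs (i + 1) (s', a') - Qs i (s', a')) := by
        apply Finset.sum_le_sum
        intro a' _
        have h := hsa₀ (s', a') (mem_univ _)
        exact mul_le_mul_of_nonneg_left h (hπ0 (i + 1) s' a')
      have h5 : ∑ a', πs (i + 1) s' a' * m = m := by
        rw [← Finset.sum_mul, hπ1, one_mul]
      have h6 : ∑ a', πs (i + 1) s' a' * (Qs (i + 1) (s', a') - Qs i (s', a'))
          = (∑ a', πs (i + 1) s' a' * Qs (i + 1) (s', a'))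
            - ∑ a', πs (i + 1) s' a' * Qs i (s', a') := by
        rw [← Finset.sum_sub_distrib]; congr 1; ext a'; ring
      have h7 := himp i s'
      rw [h6] at h4
      linarith [h4, h5.symm.le, h7]
    have key : ∀ sa : S × A, γ * m ≤ Qs (i + 1) sa - Qs i sa := by
      intro sa
      have h1 := congrFun (hQs i) sa
      have h2 := congrFun (hQs (i + 1)) sa
      simp only [bellman] at h1 h2
      have h8 : ∑ s', p sa.1 sa.2 s' * m
          ≤ ∑ s', p sa.1 sa.2 s' *
              ((∑ a', πs (i + 1) s' a' * Qs (i + 1) (s', a'))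
                - ∑ a', πs i s' a' * Qs i (s', a')) := by
        apply Finset.sum_le_sum
        intro s' _
        exact mul_le_mul_of_nonneg_left (inner s') (hp0 sa.1 sa.2 s')
      have h9 : ∑ s', p sa.1 sa.2 s' * m = m := by
        rw [← Finset.sum_mul, hp1, one_mul]
      have h10 : ∑ s', p sa.1 sa.2 s' *
              ((∑ a', πs (i + 1) s' a' * Qs (i + 1) (s', a'))
                - ∑ a', πs i s' a' * Qs i (s', a'))
          = (∑ s', p sa.1 sa.2 s' * ∑ a', πs (i + 1) s' a' * Qs (i + 1) (s', a'))
            - ∑ s', p sa.1 sa.2 s' * ∑ a', πs i s' a' * Qs i (s', a') := by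
        rw [← Finset.sum_sub_distrib]; congr 1; ext s'; ring
      rw [h10] at h8
      rw [h9] at h8
      nlinarith [h8]
    have hm0 : 0 ≤ m := by
      have := key sa₀
      nlinarith
    intro sa
    have := hsa₀ sa (mem_univ _)
    linarith
  -- Step 2: upper bound
  have hbound : ∀ i, ∀ sa : S × A, Qs i sa ≤ R / (1 - γ) := by
    intro i
    obtain ⟨sa₀, -, hsa₀⟩ := Finset.exists_max_image (univ : Finset (S × A))
      (fun sa => Qs i sa) univ_nonempty
    set M := Qs i sa₀ with hM
    have h1 := congrFun (hQs i) sa₀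
    simp only [bellman] at h1
    have inner : ∀ s' : S, ∑ a', πs i s' a' * Qs i (s', a') ≤ M := by
      intro s'
      calc ∑ a', πs i s' a' * Qs i (s', a') ≤ ∑ a', πs i s' a' * M := by
            apply Finset.sum_le_sum
            intro a' _
            exact mul_le_mul_of_nonneg_left (hsa₀ (s', a') (mem_univ _)) (hπ0 i s' a')
        _ = M := by rw [← Finset.sum_mul, hπ1, one_mul]
    have h8 : ∑ s', p sa₀.1 sa₀.2 s' * ∑ a', πs i s' a' * Qs i (s', a')
        ≤ ∑ s', p sa₀.1 sa₀.2 s' * M := by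
      apply Finset.sum_le_sum
      intro s' _
      exact mul_le_mul_of_nonneg_left (inner s') (hp0 sa₀.1 sa₀.2 s')
    have h9 : ∑ s', p sa₀.1 sa₀.2 s' * M = M := by
      rw [← Finset.sum_mul, hp1, one_mul]
    rw [h9] at h8
    have hr := (abs_le.mp (hR sa₀.1 sa₀.2)).2
    have hM1 : M ≤ R / (1 - γ) := by
      rw [le_div_iff₀ (by linarith)]
      nlinarith [h1]
    intro sa
    exact le_trans (hsa₀ sa (mem_univ _)) hM1
  have hmono : ∀ sa : S × A, Monotone fun i => Qs i sa := fun sa =>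
    monotone_nat_of_le_succ fun i => hstep i sa
  refine ⟨hmono, hbound, fun sa => ?_⟩
  have hbdd : BddAbove (Set.range fun i => Qs i sa) := by
    refine ⟨R / (1 - γ), ?_⟩
    rintro x ⟨i, rfl⟩
    exact hbound i sa
  exact ⟨_, tendsto_atTop_ciSup (hmono sa) hbdd⟩
end

section
/- (Optimality at convergence of Policy Iteration, Theorem 1) Let Π be a set of policies and let π* ∈ Π satisfy, for every state s and every policy π ∈ Π, ∑_a π*(a|s) Q^{π*}(s,a) ≥ ∑_a π(a|s) Q^{π*}(s,a). Then Q^{π*}(s,a) ≥ Q^π(s,a) for every π ∈ Π and every (s,a) ∈ S × A; that is, π* is optimal among the policies in Π. -/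
open Finset

/-- **Optimality at convergence of Policy Iteration.** If `π* ∈ Π` satisfies, for every state
`s` and every `π ∈ Π`, `∑_a π*(a|s) Q^{π*}(s,a) ≥ ∑_a π(a|s) Q^{π*}(s,a)`, then
`Q^{π*} ≥ Q^π` pointwise for every `π ∈ Π`. -/
theorem policy_iteration_optimality
    {S A : Type*} [Fintype S] [Fintype A] [Nonempty S] [Nonempty A]
    (p : S → A → S → ℝ) (r : S → A → ℝ) (γ : ℝ)
    (hp0 : ∀ s a s', 0 ≤ p s a s') (hp1 : ∀ s a, ∑ s', p s a s' = 1)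
    (hγ0 : 0 ≤ γ) (hγ1 : γ < 1)
    (Pi : Set (S → A → ℝ))
    (hPi : ∀ π ∈ Pi, (∀ s a, 0 ≤ π s a) ∧ (∀ s, ∑ a, π s a = 1))
    (πstar : S → A → ℝ) (hπstar : πstar ∈ Pi)
    (Qstar : S × A → ℝ) (hQstar : bellman p r γ πstar Qstar = Qstar)
    (hopt : ∀ s : S, ∀ π ∈ Pi,
      ∑ a, π s a * Qstar (s, a) ≤ ∑ a, πstar s a * Qstar (s, a)) :
    ∀ π ∈ Pi, ∀ Qpi : S × A → ℝ, bellman p r γ π Qpi = Qpi →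
      ∀ sa : S × A, Qpi sa ≤ Qstar sa := by
  intro π hπ Qpi hQpi sa
  obtain ⟨hπ0, hπ1⟩ := hPi π hπ
  obtain ⟨sa0, -, hmax⟩ := Finset.exists_max_image (univ : Finset (S × A))
    (fun sa => Qpi sa - Qstar sa) univ_nonempty
  set M := Qpi sa0 - Qstar sa0 with hM
  have hmax' : ∀ x : S × A, Qpi x - Qstar x ≤ M := fun x => hmax x (mem_univ x)
  have key : ∀ s' : S,
      (∑ a', π s' a' * Qpi (s', a')) - (∑ a', πstar s' a' * Qstar (s', a')) ≤ M := by
    intro s'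
    have h1 : ∑ a', π s' a' * Qpi (s', a') ≤ ∑ a', π s' a' * (Qstar (s', a') + M) := by
      apply Finset.sum_le_sum
      intro a' _
      exact mul_le_mul_of_nonneg_left (by have := hmax' (s', a'); linarith) (hπ0 s' a')
    have h2 : ∑ a', π s' a' * (Qstar (s', a') + M)
        = (∑ a', π s' a' * Qstar (s', a')) + M := by
      simp [mul_add, Finset.sum_add_distrib, ← Finset.sum_mul, hπ1 s']
    have h3 := hopt s' π hπ
    linarith
  have hsum : (∑ s', p sa0.1 sa0.2 s' * ∑ a', π s' a' * Qpi (s', a'))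
      - (∑ s', p sa0.1 sa0.2 s' * ∑ a', πstar s' a' * Qstar (s', a')) ≤ M := by
    rw [← Finset.sum_sub_distrib]
    calc ∑ s', (p sa0.1 sa0.2 s' * (∑ a', π s' a' * Qpi (s', a'))
          - p sa0.1 sa0.2 s' * ∑ a', πstar s' a' * Qstar (s', a'))
        ≤ ∑ s', p sa0.1 sa0.2 s' * M := by
          apply Finset.sum_le_sum
          intro s' _
          rw [← mul_sub]
          exact mul_le_mul_of_nonneg_left (key s') (hp0 _ _ s')
      _ = M := by rw [← Finset.sum_mul, hp1, one_mul]
  have e1 := congrFun hQpi sa0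
  have e2 := congrFun hQstar sa0
  simp only [bellman] at e1 e2
  have hMle : M ≤ γ * M := by
    have := mul_le_mul_of_nonneg_left hsum hγ0
    rw [hM, ← e1, ← e2]
    nlinarith [this]
  have hM0 : M ≤ 0 := by nlinarith
  have := hmax' sa
  linarith
end
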